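/- arXiv:1106.1601 — 2 statements merged into one kernel-verified Lean document; each statement's English description precedes it below -/
import Mathlib

section
/- Let G be a finite abelian group with |G| = N, let Γ be a finite set of characters of G, and let ε = (ε_γ)_{γ∈Γ} be a tuple of reals in (0,1]. Then |B(Γ, ε)| ≥ (N/2) · ∏_{γ∈Γ} ε_γ. -/
/-- For `z` on the unit circle, `‖z‖ = |arg z| / (2π)`. -/
noncomputable def bohrNorm (z : ℂ) : ℝ := |Complex.arg z| / (2 * Real.pi)

open Classical in
/-- The Bohr set `B(Γ, ε) = {n ∈ G : ‖γ(n)‖ < ε_γ for all γ ∈ Γ}`. -/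
noncomputable def bohrSet {G : Type*} [AddCommGroup G] [Fintype G]
    (Γ : Finset (AddChar G ℂ)) (ε : AddChar G ℂ → ℝ) : Finset G :=
  Finset.univ.filter fun n => ∀ γ ∈ Γ, bohrNorm (γ n) < ε γ

/-- A Bohr set `B(Γ, ε)` of dimension `d = |Γ|` is regular if for all `η` with
`d|η| ≤ 1/100` one has `(1 − 100d|η|)|B_1| < |B_{1+η}| < (1 + 100d|η|)|B_1|`. -/
def IsRegularBohr {G : Type*} [AddCommGroup G] [Fintype G]
    (Γ : Finset (AddChar G ℂ)) (ε : AddChar G ℂ → ℝ) : Prop :=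
  ∀ η : ℝ, (Γ.card : ℝ) * |η| ≤ 1 / 100 →
    (1 - 100 * Γ.card * |η|) * (bohrSet Γ ε).card
        < ((bohrSet Γ (fun γ => (1 + η) * ε γ)).card : ℝ) ∧
    ((bohrSet Γ (fun γ => (1 + η) * ε γ)).card : ℝ)
        < (1 + 100 * Γ.card * |η|) * (bohrSet Γ ε).card

open Classical in
/-- Indicator function of a finite set, real-valued. -/
noncomputable def indic {G : Type*} (B : Finset G) : G → ℝ := fun x => if x ∈ B then 1 else 0

/-- Normalized indicator (uniform measure) of a finite set. -/
noncomputable def muFn {G : Type*} (B : Finset G) : G → ℝ := fun x => indic B x / B.card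

/-- Convolution `(f ∗ g)(x) = ∑_y f(y) g(x − y)` on a finite abelian group. -/
noncomputable def conv {G : Type*} [AddCommGroup G] [Fintype G] (f g : G → ℝ) : G → ℝ :=
  fun x => ∑ y, f y * g (x - y)

/-!
Send `n ∈ G` to its phase vector `(arg γ(n) / 2π)_γ` in the torus `(ℝ/ℤ)^Γ` and surround it by
the box of side lengths `ε_γ`. The `N` boxes have total volume `N ∏ ε_γ`, so some point `θ` of the
torus lies in at least that many of them. Any two centres `a, b` of boxes containing `θ` have
phases within `ε_γ` of each other, i.e. `a - b ∈ B(Γ, ε)`, and a set `A` has at least `|A|`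
differences. This even gives `|B(Γ, ε)| ≥ N ∏ ε_γ`.
-/

open MeasureTheory Metric Finset Complex Real
open scoped Pointwise

instance UnitAddCircle.isProbabilityMeasure_volume :
    IsProbabilityMeasure (volume : Measure UnitAddCircle) :=
  ⟨UnitAddCircle.measure_univ⟩

theorem UnitAddCircle.volume_ball (x : UnitAddCircle) (r : ℝ) :
    volume (ball x r) = ENNReal.ofReal (min 1 (2 * r)) := by
  rw [← measure_congr AddCircle.closedBall_ae_eq_ball, AddCircle.volume_closedBall]

open Classical in
theorem exists_sum_measure_le_card_filter_mem {Ω ι : Type*} [MeasurableSpace Ω] [Fintype ι]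
    (μ : Measure Ω) [IsProbabilityMeasure μ] {s : ι → Set Ω} (hs : ∀ i, MeasurableSet (s i)) :
    ∃ ω, ∑ i, μ (s i) ≤ #{i | ω ∈ s i} := by
  have hcount : ∀ ω, (#{i | ω ∈ s i} : ENNReal) = ∑ i, (s i).indicator 1 ω := by
    intro ω
    rw [Finset.card_filter]
    push_cast
    simp [Set.indicator_apply]
  have hint : ∫⁻ ω, (#{i | ω ∈ s i} : ENNReal) ∂μ = ∑ i, μ (s i) := by
    simp_rw [hcount]
    rw [lintegral_finsetSum _ fun i _ => measurable_one.indicator (hs i)]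
    simp [lintegral_indicator_one (hs _)]
  have hfinite : ∑ i, μ (s i) ≠ ⊤ := ENNReal.sum_ne_top.2 fun i _ => measure_ne_top μ _
  obtain ⟨ω, hω⟩ := exists_lintegral_le (μ := μ) (hint ▸ hfinite)
  exact ⟨ω, hint ▸ hω⟩

namespace AddChar

variable {G : Type*} [AddCommGroup G]

noncomputable def phase (γ : AddChar G ℂ) : G →+ UnitAddCircle :=
  AddMonoidHom.mk' (fun n => AddCircle.equivAddCircle (2 * π) 1 two_pi_pos.ne' one_ne_zero
      (arg (γ n) : Real.Angle)) fun a b => by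
    rw [map_add_eq_mul, arg_mul_coe_angle (γ.val_isUnit a).ne_zero (γ.val_isUnit b).ne_zero]
    exact map_add _ _ _

theorem phase_apply (γ : AddChar G ℂ) (n : G) :
    γ.phase n = ((arg (γ n) / (2 * π) : ℝ) : UnitAddCircle) := by
  refine (AddCircle.equivAddCircle_apply_mk _ _ _ _ _).trans ?_
  ring_nf

theorem norm_phase (γ : AddChar G ℂ) (n : G) : ‖γ.phase n‖ = bohrNorm (γ n) := by
  have h2π : 0 < 2 * π := two_pi_pos
  have harg : |arg (γ n) / (2 * π)| ≤ |(1 : ℝ)| / 2 := by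
    rw [abs_div, abs_of_pos h2π, div_le_div_iff₀ h2π two_pos, abs_one]
    linarith [abs_arg_le_pi (γ n)]
  rw [phase_apply, (AddCircle.norm_coe_eq_abs_iff 1 one_ne_zero).2 harg, abs_div,
    abs_of_pos h2π, bohrNorm]

end AddChar

section BohrSet

variable {G : Type*} [AddCommGroup G] {Γ : Finset (AddChar G ℂ)} {ε : AddChar G ℂ → ℝ}

variable (Γ ε) in
def phaseBox (n : G) : Set (Γ → UnitAddCircle) :=
  Set.univ.pi fun γ => ball (γ.1.phase n) (ε γ / 2)

theorem measurableSet_phaseBox (n : G) : MeasurableSet (phaseBox Γ ε n) :=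
  .univ_pi fun _ => measurableSet_ball

theorem volume_phaseBox (hε : ∀ γ ∈ Γ, 0 < ε γ ∧ ε γ ≤ 1) (n : G) :
    volume (phaseBox Γ ε n) = ENNReal.ofReal (∏ γ ∈ Γ, ε γ) := by
  have hball : ∀ γ : Γ, volume (ball (γ.1.phase n) (ε γ / 2)) = ENNReal.ofReal (ε γ) := by
    intro γ
    rw [UnitAddCircle.volume_ball, mul_div_cancel₀ _ two_ne_zero, min_eq_right (hε γ.1 γ.2).2]
  rw [phaseBox, volume_pi_pi, Finset.prod_congr rfl fun γ _ => hball γ,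
    ← ENNReal.ofReal_prod_of_nonneg fun γ _ => (hε γ.1 γ.2).1.le, Finset.prod_coe_sort Γ ε]

variable [Fintype G]

theorem mem_bohrSet {n : G} : n ∈ bohrSet Γ ε ↔ ∀ γ ∈ Γ, bohrNorm (γ n) < ε γ := by
  simp [bohrSet]

theorem sub_mem_bohrSet_of_mem_phaseBox {θ : Γ → UnitAddCircle} {a b : G}
    (ha : θ ∈ phaseBox Γ ε a) (hb : θ ∈ phaseBox Γ ε b) : a - b ∈ bohrSet Γ ε := by
  refine mem_bohrSet.2 fun γ hγ => ?_
  have ha' : dist (θ ⟨γ, hγ⟩) (γ.phase a) < ε γ / 2 := ha ⟨γ, hγ⟩ trivial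
  have hb' : dist (θ ⟨γ, hγ⟩) (γ.phase b) < ε γ / 2 := hb ⟨γ, hγ⟩ trivial
  calc bohrNorm (γ (a - b)) = dist (γ.phase a) (γ.phase b) := by
        rw [← AddChar.norm_phase, map_sub, dist_eq_norm]
    _ ≤ dist (θ ⟨γ, hγ⟩) (γ.phase a) + dist (θ ⟨γ, hγ⟩) (γ.phase b) := dist_triangle_left _ _ _
    _ < ε γ := by linarith

open Classical in
theorem card_filter_mem_phaseBox_le (θ : Γ → UnitAddCircle) :
    #{n | θ ∈ phaseBox Γ ε n} ≤ #(bohrSet Γ ε) := by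
  refine card_le_card_sub_self.trans (card_le_card fun n hn => ?_)
  obtain ⟨a, ha, b, hb, rfl⟩ := mem_sub.1 hn
  exact sub_mem_bohrSet_of_mem_phaseBox (mem_filter.1 ha).2 (mem_filter.1 hb).2

theorem card_mul_prod_le_card_bohrSet (hε : ∀ γ ∈ Γ, 0 < ε γ ∧ ε γ ≤ 1) :
    (Fintype.card G : ℝ) * ∏ γ ∈ Γ, ε γ ≤ #(bohrSet Γ ε) := by
  classical
  obtain ⟨θ, hθ⟩ :=
    exists_sum_measure_le_card_filter_mem volume (measurableSet_phaseBox (Γ := Γ) (ε := ε))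
  simp only [volume_phaseBox hε, sum_const, card_univ, nsmul_eq_mul] at hθ
  rw [← ENNReal.ofReal_natCast, ← ENNReal.ofReal_mul (Nat.cast_nonneg _),
    ← ENNReal.ofReal_natCast, ENNReal.ofReal_le_ofReal_iff (Nat.cast_nonneg _)] at hθ
  exact hθ.trans (mod_cast card_filter_mem_phaseBox_le θ)

end BohrSet

/-- Size lower bound for Bohr sets: `|B(Γ, ε)| ≥ (N/2) · ∏_{γ∈Γ} ε_γ`. -/
theorem bohrSet_card_lower {G : Type*} [AddCommGroup G] [Fintype G]
    (Γ : Finset (AddChar G ℂ)) (ε : AddChar G ℂ → ℝ)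
    (hε : ∀ γ ∈ Γ, 0 < ε γ ∧ ε γ ≤ 1) :
    (Fintype.card G : ℝ) / 2 * ∏ γ ∈ Γ, ε γ ≤ ((bohrSet Γ ε).card : ℝ) := by
  have hprod : 0 ≤ ∏ γ ∈ Γ, ε γ := prod_nonneg fun γ hγ => (hε γ hγ).1.le
  calc (Fintype.card G : ℝ) / 2 * ∏ γ ∈ Γ, ε γ ≤ Fintype.card G * ∏ γ ∈ Γ, ε γ := by
        gcongr
        exact half_le_self (Nat.cast_nonneg _)
    _ ≤ #(bohrSet Γ ε) := card_mul_prod_le_card_bohrSet hε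
end

section
/- Let G be a finite abelian group, let Γ be a finite set of characters of G, and let ε = (ε_γ)_{γ∈Γ} be a tuple of reals in (0,1]. Then |B(Γ, ε)| ≤ 8^{|Γ|+1} · |B(Γ, ε/2)|. -/
/-!
Cut the circle into arcs of width `π ε_γ` for each `γ ∈ Γ`. If `n, m ∈ B(Γ, ε)` lie in the same
arc for every `γ`, then `arg γ(m - n) = arg γ(m) - arg γ(n)` (exact, as arcs of width at most `π`
cannot wrap around) has absolute value `< π ε_γ`, i.e. `m - n ∈ B(Γ, ε/2)`. So each cell of the
partition translates into `B(Γ, ε/2)`, and since `|arg γ(n)| < 2π ε_γ` only four arcs per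
character meet `B(Γ, ε)`, giving `|B(Γ, ε)| ≤ 4^|Γ| |B(Γ, ε/2)|`.
-/

open Finset Real

namespace Complex

theorem arg_div_eq_sub_of_mem_Ioc {x y : ℂ} (hx : x ≠ 0) (hy : y ≠ 0)
    (h : arg x - arg y ∈ Set.Ioc (-π) π) : arg (x / y) = arg x - arg y := by
  rw [arg_coe_angle_eq_iff_eq_toReal.mp ((arg_div_coe_angle hx hy).trans (Angle.coe_sub _ _).symm),
    Angle.toReal_coe_eq_self_iff_mem_Ioc.mpr h]

end Complex

theorem abs_sub_lt_of_floor_div_eq {x y c : ℝ} (hc : 0 < c) (h : ⌊x / c⌋ = ⌊y / c⌋) :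
    |x - y| < c := by
  have := Int.abs_sub_lt_one_of_floor_eq_floor h
  rwa [← sub_div, abs_div, abs_of_pos hc, div_lt_one hc] at this

theorem floor_div_mem_Icc_of_abs_lt {x c : ℝ} {k : ℤ} (hc : 0 < c) (h : |x| < k * c) :
    ⌊x / c⌋ ∈ Icc (-k) (k - 1) := by
  obtain ⟨hlo, hhi⟩ := abs_lt.mp h
  rw [mem_Icc, Int.le_floor, Int.le_sub_one_iff, Int.floor_lt, le_div_iff₀ hc, div_lt_iff₀ hc]
  push_cast
  constructor <;> linarith

theorem Finset.card_le_card_mul_card_of_sub_mem {G β : Type*} [AddGroup G] [DecidableEq β]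
    {A B : Finset G} {T : Finset β} (f : G → β) (hmaps : ∀ a ∈ A, f a ∈ T)
    (hsub : ∀ a ∈ A, ∀ b ∈ A, f a = f b → b - a ∈ B) : #A ≤ #B * #T := by
  refine card_le_mul_card_image_of_maps_to hmaps #B fun t _ => ?_
  rcases eq_empty_or_nonempty {a ∈ A | f a = t} with hempty | ⟨a₀, ha₀⟩
  · simp [hempty]
  rw [mem_filter] at ha₀
  refine card_le_card_of_injOn (· - a₀) (fun b hb => ?_) fun b _ c _ h => sub_left_inj.mp h
  rw [mem_coe, mem_filter] at hb
  exact hsub a₀ ha₀.1 b hb.1 (ha₀.2.trans hb.2.symm)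

theorem bohrNorm_lt_iff {z : ℂ} {e : ℝ} : bohrNorm z < e ↔ |Complex.arg z| < 2 * π * e := by
  rw [bohrNorm, div_lt_iff₀ (by positivity), mul_comm e]

section BohrCell

variable {G : Type*} [AddCommGroup G] [Fintype G] {Γ : Finset (AddChar G ℂ)} {ε : AddChar G ℂ → ℝ}

noncomputable def bohrCell (Γ : Finset (AddChar G ℂ)) (ε : AddChar G ℂ → ℝ) (n : G) : Γ → ℤ :=
  fun γ => ⌊Complex.arg (γ.1 n) / (π * ε γ)⌋

theorem sub_mem_bohrSet_half_of_bohrCell_eq (hε : ∀ γ ∈ Γ, 0 < ε γ ∧ ε γ ≤ 1) {n m : G}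
    (h : bohrCell Γ ε n = bohrCell Γ ε m) : m - n ∈ bohrSet Γ (fun γ => ε γ / 2) := by
  simp only [bohrSet, mem_filter, mem_univ, true_and, bohrNorm_lt_iff]
  intro γ hγ
  obtain ⟨hε₀, hε₁⟩ := hε γ hγ
  have hwidth : 0 < π * ε γ := by positivity
  have hclose : |Complex.arg (γ m) - Complex.arg (γ n)| < π * ε γ :=
    abs_sub_lt_of_floor_div_eq hwidth (congrFun h ⟨γ, hγ⟩).symm
  have hwidth_le_pi : π * ε γ ≤ π := mul_le_of_le_one_right pi_pos.le hε₁
  have hne : ∀ a, γ a ≠ 0 := fun a => norm_ne_zero_iff.mp (by simp)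
  rw [AddChar.map_sub_eq_div, Complex.arg_div_eq_sub_of_mem_Ioc (hne m) (hne n)]
  · linarith
  · obtain ⟨hlo, hhi⟩ := abs_lt.mp hclose
    constructor <;> linarith

theorem bohrCell_mem_of_mem_bohrSet (hε : ∀ γ ∈ Γ, 0 < ε γ) {n : G} (hn : n ∈ bohrSet Γ ε) :
    bohrCell Γ ε n ∈ Fintype.piFinset fun _ => Icc (-2 : ℤ) 1 := by
  simp only [bohrSet, mem_filter, mem_univ, true_and, bohrNorm_lt_iff] at hn
  refine Fintype.mem_piFinset.mpr fun γ => floor_div_mem_Icc_of_abs_lt (k := 2) ?_ ?_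
  · have := hε γ γ.2
    positivity
  · have := hn γ γ.2
    push_cast
    linarith

theorem card_bohrSet_le_four_pow_mul (hε : ∀ γ ∈ Γ, 0 < ε γ ∧ ε γ ≤ 1) :
    #(bohrSet Γ ε) ≤ #(bohrSet Γ (fun γ => ε γ / 2)) * 4 ^ #Γ := by
  classical
  have h := card_le_card_mul_card_of_sub_mem (bohrCell Γ ε)
    (fun n hn => bohrCell_mem_of_mem_bohrSet (fun γ hγ => (hε γ hγ).1) hn)
    (fun n _ m _ h => sub_mem_bohrSet_half_of_bohrCell_eq hε h)
  rwa [Fintype.card_piFinset, prod_const, Int.card_Icc, card_univ, Fintype.card_coe] at h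

end BohrCell

/-- Doubling-type bound for Bohr sets: `|B(Γ, ε)| ≤ 8^{|Γ|+1} · |B(Γ, ε/2)|`. -/
theorem bohrSet_card_halving {G : Type*} [AddCommGroup G] [Fintype G]
    (Γ : Finset (AddChar G ℂ)) (ε : AddChar G ℂ → ℝ)
    (hε : ∀ γ ∈ Γ, 0 < ε γ ∧ ε γ ≤ 1) :
    ((bohrSet Γ ε).card : ℝ) ≤ 8 ^ (Γ.card + 1) * ((bohrSet Γ (fun γ => ε γ / 2)).card : ℝ) := by
  have h := card_bohrSet_le_four_pow_mul hε
  have h4 : (4 : ℝ) ^ Γ.card ≤ 8 ^ (Γ.card + 1) :=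
    (pow_le_pow_left₀ (by norm_num) (by norm_num) _).trans
      (pow_le_pow_right₀ (by norm_num) (Nat.le_succ _))
  calc ((bohrSet Γ ε).card : ℝ) ≤ (bohrSet Γ (fun γ => ε γ / 2)).card * 4 ^ Γ.card := by
        exact_mod_cast h
    _ ≤ 8 ^ (Γ.card + 1) * (bohrSet Γ (fun γ => ε γ / 2)).card := by
        rw [mul_comm]; gcongr
end
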